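/- Let G be a graph and σ an LDFS umbrella-free ordering of V(G). Let P = (P₁, uᵢ) be a normal path of G(i,j) whose last vertex is uᵢ. Then P₁ is a normal path of G(i+1,j). -/

import Mathlib

def UmbrellaFree {V : Type*} [LinearOrder V] (G : SimpleGraph V) : Prop :=
  ∀ x y z : V, x < y → y < z → G.Adj x z → G.Adj x y ∨ G.Adj y z

def LDFSOrdering {V : Type*} [LinearOrder V] (G : SimpleGraph V) : Prop :=
  ∀ a b c : V, a < b → b < c → G.Adj a c → ¬ G.Adj a b →
    ∃ d : V, a < d ∧ d < b ∧ G.Adj d b ∧ ¬ G.Adj d c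

/-- A (simple) path of `G`, as a list of distinct vertices with consecutive vertices
adjacent. -/
def IsPathList {V : Type*} (G : SimpleGraph V) (P : List V) : Prop :=
  P.Nodup ∧ P.Chain' G.Adj

/-- `P = (v₁, v₂, …)` is typical (w.r.t. the ordering σ given by the linear order on `V`):
`v₁` is the rightmost vertex of `V(P)` in σ, and `v₂` is the rightmost vertex of
`N(v₁) ∩ V(P)` in σ. -/
def TypicalPath {V : Type*} [LinearOrder V] (G : SimpleGraph V) : List V → Prop
  | [] => True
  | [_] => True
  | v1 :: v2 :: rest =>
      (∀ v ∈ v1 :: v2 :: rest, v ≤ v1) ∧ (∀ v ∈ v2 :: rest, G.Adj v1 v → v ≤ v2)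

/-- The "normality from each vertex on" condition: for any two consecutive vertices
`v_{i-1}, v_i` of the list, `v_i` is the rightmost vertex of
`N(v_{i-1}) ∩ {v_i, …, v_k}` in σ. -/
def NormalFrom {V : Type*} [LinearOrder V] (G : SimpleGraph V) : List V → Prop
  | [] => True
  | [_] => True
  | a :: b :: rest =>
      (∀ v ∈ b :: rest, G.Adj a v → v ≤ b) ∧ NormalFrom G (b :: rest)

/-- `P` is a normal path of `G` (w.r.t. σ): a typical path such that each `v_i` is the
rightmost vertex of `N(v_{i-1}) ∩ {v_i, …, v_k}` in σ. -/
def NormalPath {V : Type*} [LinearOrder V] (G : SimpleGraph V) (P : List V) : Prop :=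
  IsPathList G P ∧ (∀ h : P ≠ [], ∀ v ∈ P, v ≤ P.head h) ∧ NormalFrom G P

/-- The vertex set of `G(i,j)` (`0`-indexed), where `u_n` is the dummy isolated vertex. -/
def Gset {n : ℕ} (G : SimpleGraph (Fin (n + 1))) (i j : ℕ) : Set (Fin (n + 1)) :=
  {v | i ≤ (v : ℕ) ∧ (v : ℕ) ≤ j ∧ ∀ w : Fin (n + 1), (w : ℕ) = j + 1 → ¬ G.Adj v w}

/-- `P` is a normal path of the induced subgraph on the vertex set `S` (adjacency among
vertices of `P` in the induced subgraph coincides with adjacency in `G`). -/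
def NormalPathIn {V : Type*} [LinearOrder V] (G : SimpleGraph V) (S : Set V)
    (P : List V) : Prop :=
  (∀ v ∈ P, v ∈ S) ∧ NormalPath G P

section

variable {V : Type*} {G : SimpleGraph V}

theorem IsPathList.of_append {l₁ l₂ : List V} (h : IsPathList G (l₁ ++ l₂)) :
    IsPathList G l₁ :=
  ⟨h.1.of_append_left, h.2.left_of_append⟩

variable [LinearOrder V]

theorem NormalFrom.of_append : ∀ {l₁ l₂ : List V}, NormalFrom G (l₁ ++ l₂) → NormalFrom G l₁
  | [], _, _ | [_], _, _ => trivial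
  | _ :: _ :: _, l₂, ⟨hright, htail⟩ =>
    ⟨fun v hv ↦ hright v (List.mem_append_left l₂ hv), NormalFrom.of_append (l₂ := l₂) htail⟩

theorem NormalPath.of_append {l₁ l₂ : List V} (h : NormalPath G (l₁ ++ l₂)) :
    NormalPath G l₁ := by
  obtain ⟨hpath, hhead, hnormal⟩ := h
  refine ⟨hpath.of_append, fun hne v hv ↦ ?_, hnormal.of_append⟩
  have := hhead (by simp [hne]) v (List.mem_append_left l₂ hv)
  rwa [List.head_append_of_ne_nil hne] at this

end

theorem mem_Gset_succ {n : ℕ} {G : SimpleGraph (Fin (n + 1))} {i j : ℕ} {v : Fin (n + 1)}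
    (hv : v ∈ Gset G i j) (hvi : (v : ℕ) ≠ i) : v ∈ Gset G (i + 1) j :=
  ⟨by have := hv.1; omega, hv.2⟩

/-- If `P = (P₁, uᵢ)` is a normal path of `G(i,j)` with last vertex `uᵢ`, then `P₁` is a
normal path of `G(i+1,j)`. -/
theorem normal_path_drop_last {n : ℕ} (G : SimpleGraph (Fin (n + 1)))
    (i j : ℕ) (hi : i < n)
    (P₁ : List (Fin (n + 1)))
    (h : NormalPathIn G (Gset G i j) (P₁ ++ [(⟨i, by omega⟩ : Fin (n + 1))])) :
    NormalPathIn G (Gset G (i + 1) j) P₁ := by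
  obtain ⟨hmem, hnormal⟩ := h
  have hlast_notMem : (⟨i, by omega⟩ : Fin (n + 1)) ∉ P₁ :=
    (List.nodup_append'.mp hnormal.1.1).2.2.symm (List.mem_singleton_self _)
  refine ⟨fun v hv ↦ mem_Gset_succ (hmem v (List.mem_append_left _ hv)) fun hvi ↦ ?_,
    hnormal.of_append⟩
  exact hlast_notMem ((Fin.ext hvi : v = ⟨i, by omega⟩) ▸ hv)
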